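/- arXiv:1901.08032 — 2 statements merged into one kernel-verified Lean document; each statement's English description precedes it below -/
import Mathlib

section
/- In a ν-semiring R satisfying axiom νSR': a+b ∈ T implies a + ν(b) ∉ G unless a+b is an inessential sum, a tangible sum cannot involve ghosts: if a + b ∈ T is an essential sum then a ∉ G and b ∉ G. Consequently, if a = b + c with a ∈ T and c ∈ G, then a = b. -/
structure NuMonoid (M : Type*) [AddCommMonoid M] where
  G : Set M
  lt : M → M → Prop
  nu : M → M
  zero_mem : (0 : M) ∈ G
  add_mem : ∀ {a b : M}, a ∈ G → b ∈ G → a + b ∈ G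
  lt_irrefl : ∀ a : M, ¬ lt a a
  lt_trans : ∀ {a b c : M}, lt a b → lt b c → lt a c
  nu_mem : ∀ a : M, nu a ∈ G
  nu_idem : ∀ a : M, nu (nu a) = nu a
  nu_ghost : ∀ a ∈ G, nu a = a
  nu_add : ∀ a b : M, nu (a + b) = nu a + nu b
  nu_zero : nu 0 = 0
  add_eq_left : ∀ a b : M, lt (nu b) (nu a) → a + b = a
  add_eq_nu : ∀ a b : M, nu a = nu b → a + b = nu a

structure NuSemiring (R : Type*) [CommSemiring R] extends NuMonoid R where
  T : Set R
  T_nonghost : ∀ a ∈ T, a ∉ G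
  units_tangible : ∀ a : R, IsUnit a → a ∈ T
  psrb : ∀ a b : R, a + b ∈ T → a + b ≠ a → a + b ≠ b → a + nu b ∉ G

/-- In a ν-semiring (whose axiom νSR' is the field `psrb`): an essential
tangible sum cannot involve ghosts, and if a tangible `a` ghost-surpasses `b`
(i.e. `a = b + c` with `c` ghost) then `a = b`. -/
theorem tangible_sum_no_ghosts {R : Type*} [CommSemiring R] (S : NuSemiring R) :
    (∀ a b : R, a + b ∈ S.T → a + b ≠ a → a + b ≠ b → a ∉ S.G ∧ b ∉ S.G) ∧
    (∀ a b c : R, a ∈ S.T → c ∈ S.G → a = b + c → a = b) := by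
  have main : ∀ a b : R, a + b ∈ S.T → a + b ≠ a → a + b ≠ b → a ∉ S.G ∧ b ∉ S.G := by
    intro a b hT hna hnb
    refine ⟨fun haG => ?_, fun hbG => ?_⟩
    · exact S.psrb a b hT hna hnb (S.add_mem haG (S.nu_mem b))
    · exact S.psrb b a (by rwa [add_comm]) (by rwa [add_comm]) (by rwa [add_comm])
        (S.add_mem hbG (S.nu_mem a))
  refine ⟨main, fun a b c haT hcG heq => ?_⟩
  by_contra hne
  have h1 : b + c ≠ b := fun h => hne (heq.trans h)
  have h2 : b + c ≠ c := fun h => S.T_nonghost a haT (by rw [heq, h]; exact hcG)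
  exact (main b c (heq ▸ haT) h1 h2).2 hcG
end

section
/- (Frobenius Property) In a supertropical semiring R (a ν-semiring whose ghost ideal G is totally ordered), for all a, b ∈ R and all n ≥ 1, (a + b)ⁿ = aⁿ + bⁿ. -/
section Aux

variable {R : Type*} [CommSemiring R] (S : NuSemiring R)

lemma NuSemiring.ghost_idem {x : R} (hx : x ∈ S.G) : x + x = x := by
  rw [S.add_eq_nu x x rfl, S.nu_ghost x hx]

lemma absorb_aux {a b : R} (h : a + b = a) :
    ∀ n : ℕ, a ^ (n + 1) + b ^ (n + 1) = a ^ (n + 1) := by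
  intro n
  induction n with
  | zero => simpa using h
  | succ n ih =>
    have h1 : a ^ (n + 2) = a ^ (n + 2) + a * b ^ (n + 1) := by
      calc a ^ (n + 2) = a * (a ^ (n + 1) + b ^ (n + 1)) := by rw [ih]; ring
        _ = a ^ (n + 2) + a * b ^ (n + 1) := by ring
    calc a ^ (n + 2) + b ^ (n + 2)
        = (a ^ (n + 2) + a * b ^ (n + 1)) + b ^ (n + 2) := by rw [← h1]
      _ = a ^ (n + 2) + b ^ (n + 1) * (a + b) := by ring
      _ = a ^ (n + 2) + a * b ^ (n + 1) := by rw [h]; ring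
      _ = a ^ (n + 2) := h1.symm

lemma NuSemiring.nupow (a : R) :
    ∀ n : ℕ, (S.nu a) ^ (n + 1) = S.nu (a ^ (n + 1)) := by
  intro n
  induction n with
  | zero => simp
  | succ n ih =>
    have h2 : S.nu a = a + a := (S.add_eq_nu a a rfl).symm
    have h3 : S.nu (a ^ (n + 1)) = a ^ (n + 1) + a ^ (n + 1) :=
      (S.add_eq_nu (a ^ (n + 1)) (a ^ (n + 1)) rfl).symm
    have h4 : a ^ (n + 2) + a ^ (n + 2) = S.nu (a ^ (n + 2)) :=
      S.add_eq_nu _ _ rfl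
    calc (S.nu a) ^ (n + 2) = (S.nu a) * (S.nu a) ^ (n + 1) := by ring
      _ = (a + a) * (a ^ (n + 1) + a ^ (n + 1)) := by rw [ih, h3, ← h2]
      _ = (a ^ (n + 2) + a ^ (n + 2)) + (a ^ (n + 2) + a ^ (n + 2)) := by ring
      _ = S.nu (a ^ (n + 2)) + S.nu (a ^ (n + 2)) := by rw [h4]
      _ = S.nu (a ^ (n + 2)) := S.ghost_idem (S.nu_mem _)

end Aux

/-- Frobenius property: in a supertropical semiring (a ν-semiring whose ghost
ideal is totally ordered), `(a+b)ⁿ = aⁿ + bⁿ` for all `n ≥ 1`. -/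
theorem frobenius_property {R : Type*} [CommSemiring R] (S : NuSemiring R)
    (htotal : ∀ a ∈ S.G, ∀ b ∈ S.G, S.lt a b ∨ a = b ∨ S.lt b a)
    (a b : R) (n : ℕ) (hn : 1 ≤ n) :
    (a + b) ^ n = a ^ n + b ^ n := by
  obtain ⟨m, rfl⟩ : ∃ m, n = m + 1 := ⟨n - 1, (Nat.succ_pred_eq_of_pos hn).symm⟩
  rcases htotal (S.nu a) (S.nu_mem a) (S.nu b) (S.nu_mem b) with h | h | h
  · -- ν a < ν b : a + b = b
    have hba : b + a = b := S.add_eq_left b a h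
    have hab : a + b = b := by rw [add_comm]; exact hba
    rw [hab, add_comm (a ^ (m + 1)), absorb_aux hba m]
  · -- ν a = ν b
    have hab : a + b = S.nu a := S.add_eq_nu a b h
    have hba : a + b = S.nu b := by rw [add_comm]; exact S.add_eq_nu b a h.symm
    have h1 : (a + b) ^ (m + 1) = S.nu (a ^ (m + 1)) := by rw [hab, S.nupow]
    have h2 : (a + b) ^ (m + 1) = S.nu (b ^ (m + 1)) := by rw [hba, S.nupow]
    have h3 : S.nu (a ^ (m + 1)) = S.nu (b ^ (m + 1)) := by rw [← h1, ← h2]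
    rw [S.add_eq_nu _ _ h3, h1]
  · -- ν b < ν a : a + b = a
    have hab : a + b = a := S.add_eq_left a b h
    rw [hab, absorb_aux hab m]
end
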